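/- For the complete {2,r}-hypergraph K_t^{{2,r}} on t vertices and positive constant α_r, the maximum over the standard simplex of L(x) = Σ_{i<j} x_i x_j + α_r Σ_{|e|=r, e ⊆ [t]} Π_{i ∈ e} x_i equals (t-1)/(2t) + α_r · Π_{i=1}^{r-1}(t-i) / (r! t^{r-1}), attained at the uniform weighting x_i = 1/t. -/

import Mathlib

open Finset

def stdSimplex' (n : ℕ) : Set (Fin n → ℝ) :=
  {x | (∀ i, 0 ≤ x i) ∧ ∑ i, x i = 1}

/-!
Replacing two unequal coordinates `x i ≠ x j` of a point of the simplex by their mean keeps it in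
the simplex and, writing `e_k` for the elementary symmetric sums, adds `((x i - x j) / 2) ^ 2`
times an `e_(k-2)` of the remaining coordinates to `e_k` (and leaves `e_0`, `e_1` alone). So it
strictly increases `e_2 + α e_r` for `α ≥ 0`, and a maximizer, which exists by compactness, must be
the uniform point, where `e_k = (t choose k) / t ^ k`.
-/

section Esymm

variable {ι R : Type*}

def esymmOn [CommSemiring R] (s : Finset ι) (x : ι → R) (k : ℕ) : R :=
  ∑ e ∈ s.powersetCard k, ∏ i ∈ e, x i

variable [CommSemiring R] (s : Finset ι) (x : ι → R)

@[simp]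
theorem esymmOn_zero : esymmOn s x 0 = 1 := by
  simp [esymmOn]

theorem esymmOn_one : esymmOn s x 1 = ∑ i ∈ s, x i := by
  simp [esymmOn, powersetCard_one]

theorem esymmOn_const (c : R) (k : ℕ) : esymmOn s (fun _ ↦ c) k = s.card.choose k * c ^ k := by
  rw [esymmOn, sum_congr rfl fun e he ↦ by rw [prod_const, (mem_powersetCard.1 he).2],
    sum_const, card_powersetCard, nsmul_eq_mul]

variable {s x}

theorem esymmOn_congr {y : ι → R} (h : ∀ i ∈ s, x i = y i) (k : ℕ) :
    esymmOn s x k = esymmOn s y k :=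
  sum_congr rfl fun _ he ↦ prod_congr rfl fun i hi ↦ h i ((mem_powersetCard.1 he).1 hi)

theorem esymmOn_nonneg [PartialOrder R] [IsOrderedRing R] (hx : ∀ i, 0 ≤ x i) (k : ℕ) :
    0 ≤ esymmOn s x k :=
  sum_nonneg fun _ _ ↦ prod_nonneg fun i _ ↦ hx i

variable [DecidableEq ι]

theorem esymmOn_insert {a : ι} (ha : a ∉ s) (k : ℕ) :
    esymmOn (insert a s) x (k + 1) = esymmOn s x (k + 1) + x a * esymmOn s x k := by
  have ha' : ∀ e ∈ s.powersetCard k, a ∉ e := fun e he h ↦ ha ((mem_powersetCard.1 he).1 h)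
  rw [esymmOn, powersetCard_succ_insert ha, sum_union, sum_image, esymmOn, esymmOn, mul_sum]
  · exact congrArg _ (sum_congr rfl fun e he ↦ prod_insert (ha' e he))
  · intro e he e' he' h
    rw [← erase_insert (ha' e he), h, erase_insert (ha' e' he')]
  · refine disjoint_left.2 fun e he he' ↦ ?_
    obtain ⟨e', -, rfl⟩ := mem_image.1 he'
    exact ha ((mem_powersetCard.1 he).1 (mem_insert_self a e'))

theorem esymmOn_insert_insert {i j : ι} (hi : i ∉ s) (hj : j ∉ s) (hij : i ≠ j) (k : ℕ) :
    esymmOn (insert i (insert j s)) x (k + 2)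
      = esymmOn s x (k + 2) + (x i + x j) * esymmOn s x (k + 1) + x i * x j * esymmOn s x k := by
  rw [esymmOn_insert (by simp [hij, hi]), esymmOn_insert hj, esymmOn_insert hj]
  ring

end Esymm

section Averaging

variable {ι : Type*} [DecidableEq ι]

noncomputable def averageAt (x : ι → ℝ) (i j : ι) : ι → ℝ :=
  fun a ↦ if a = i ∨ a = j then (x i + x j) / 2 else x a

variable {x : ι → ℝ} {i j : ι}

theorem averageAt_of_ne {a : ι} (hai : a ≠ i) (haj : a ≠ j) : averageAt x i j a = x a := by
  simp [averageAt, hai, haj]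

variable [Fintype ι]

theorem univ_eq_insert_insert_compl (hij : i ≠ j) :
    (univ : Finset ι) = insert i (insert j ({i, j}ᶜ)) := by
  ext a; by_cases a = i <;> by_cases a = j <;> simp_all

theorem sum_averageAt (hij : i ≠ j) : ∑ a, averageAt x i j a = ∑ a, x a := by
  have hi : i ∉ insert j ({i, j}ᶜ : Finset ι) := by simp [hij]
  have hj : j ∉ ({i, j}ᶜ : Finset ι) := by simp
  rw [univ_eq_insert_insert_compl hij, sum_insert hi, sum_insert hj, sum_insert hi, sum_insert hj,
    sum_congr rfl fun a ha ↦ averageAt_of_ne (by simp_all) (by simp_all)]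
  simp only [averageAt, true_or, or_true, if_true]
  ring

theorem averageAt_mem_stdSimplex (hx : x ∈ stdSimplex ℝ ι) (hij : i ≠ j) :
    averageAt x i j ∈ stdSimplex ℝ ι := by
  refine ⟨fun a ↦ ?_, (sum_averageAt hij).trans hx.2⟩
  unfold averageAt
  split_ifs
  · linarith [hx.1 i, hx.1 j]
  · exact hx.1 a

theorem esymmOn_averageAt (hij : i ≠ j) (k : ℕ) :
    esymmOn univ (averageAt x i j) (k + 2)
      = esymmOn univ x (k + 2) + ((x i - x j) / 2) ^ 2 * esymmOn {i, j}ᶜ x k := by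
  have hi : i ∉ ({i, j}ᶜ : Finset ι) := by simp
  have hj : j ∉ ({i, j}ᶜ : Finset ι) := by simp
  have hcongr (n : ℕ) : esymmOn {i, j}ᶜ (averageAt x i j) n = esymmOn {i, j}ᶜ x n :=
    esymmOn_congr (fun a ha ↦ by
      simp only [mem_compl, mem_insert, mem_singleton, not_or] at ha
      exact averageAt_of_ne ha.1 ha.2) n
  rw [univ_eq_insert_insert_compl hij, esymmOn_insert_insert hi hj hij,
    esymmOn_insert_insert hi hj hij, hcongr, hcongr, hcongr]
  simp only [averageAt, true_or, or_true, if_true]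
  ring

theorem esymmOn_le_averageAt (hx : ∀ a, 0 ≤ x a) (hij : i ≠ j) :
    ∀ k, esymmOn univ x k ≤ esymmOn univ (averageAt x i j) k
  | 0 => by simp
  | 1 => by simp [esymmOn_one, sum_averageAt hij]
  | k + 2 => by
    rw [esymmOn_averageAt hij]
    exact le_add_of_nonneg_right (mul_nonneg (sq_nonneg _) (esymmOn_nonneg hx k))

theorem esymmOn_two_lt_averageAt (hne : x i ≠ x j) :
    esymmOn univ x 2 < esymmOn univ (averageAt x i j) 2 := by
  have hij : i ≠ j := fun h ↦ hne (congrArg x h)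
  rw [esymmOn_averageAt hij 0, esymmOn_zero, mul_one, lt_add_iff_pos_right]
  exact sq_pos_of_ne_zero (div_ne_zero (sub_ne_zero.2 hne) two_ne_zero)

end Averaging

section Lagrangian

variable {ι : Type*} [Fintype ι]

def lagrangian (r : ℕ) (α : ℝ) (x : ι → ℝ) : ℝ :=
  esymmOn univ x 2 + α * esymmOn univ x r

theorem continuous_lagrangian (r : ℕ) (α : ℝ) : Continuous (lagrangian (ι := ι) r α) := by
  unfold lagrangian esymmOn
  fun_prop

theorem lagrangian_lt_averageAt [DecidableEq ι] {r : ℕ} {α : ℝ} (hα : 0 ≤ α) {x : ι → ℝ}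
    (hx : ∀ a, 0 ≤ x a) {i j : ι} (hne : x i ≠ x j) :
    lagrangian r α x < lagrangian r α (averageAt x i j) :=
  add_lt_add_of_lt_of_le (esymmOn_two_lt_averageAt hne)
    (mul_le_mul_of_nonneg_left (esymmOn_le_averageAt hx (fun h ↦ hne (congrArg x h)) r) hα)

theorem eq_const_of_mem_stdSimplex {x : ι → ℝ} (hx : x ∈ stdSimplex ℝ ι)
    (hconst : ∀ a b, x a = x b) :
    x = fun _ : ι ↦ 1 / (Fintype.card ι : ℝ) := by
  funext a
  have hsum := hx.2
  rw [sum_congr rfl fun b _ ↦ hconst b a, sum_const, card_univ, nsmul_eq_mul] at hsum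
  exact eq_one_div_of_mul_eq_one_right hsum

theorem uniform_mem_stdSimplex [Nonempty ι] :
    (fun _ : ι ↦ 1 / (Fintype.card ι : ℝ)) ∈ stdSimplex ℝ ι := by
  refine ⟨fun _ ↦ by positivity, ?_⟩
  rw [sum_const, card_univ, nsmul_eq_mul, mul_one_div_cancel (by positivity)]

theorem lagrangian_le_uniform [Nonempty ι] {r : ℕ} {α : ℝ} (hα : 0 ≤ α) {x : ι → ℝ}
    (hx : x ∈ stdSimplex ℝ ι) :
    lagrangian r α x ≤ lagrangian r α (fun _ : ι ↦ 1 / (Fintype.card ι : ℝ)) := by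
  classical
  obtain ⟨x₀, hx₀, hmax⟩ := (isCompact_stdSimplex ℝ ι).exists_isMaxOn ⟨x, hx⟩
    (continuous_lagrangian r α).continuousOn
  have hconst : ∀ a b, x₀ a = x₀ b := fun a b ↦ by
    by_contra hne
    exact (lagrangian_lt_averageAt hα hx₀.1 hne).not_ge
      (hmax (averageAt_mem_stdSimplex hx₀ fun h ↦ hne (congrArg x₀ h)))
  rw [← eq_const_of_mem_stdSimplex hx₀ hconst]
  exact hmax hx

end Lagrangian

theorem mul_prod_Icc_sub_eq_descFactorial (t k : ℕ) :
    (t : ℝ) * ∏ i ∈ Icc 1 k, ((t : ℝ) - i) = t.descFactorial (k + 1) := by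
  rw [Nat.descFactorial_eq_prod_range, ← prod_range_natCast_sub, prod_range_succ',
    ← Ico_add_one_right_eq_Icc, prod_Ico_eq_prod_range]
  simp [add_comm, mul_comm]

theorem choose_mul_inv_pow {t : ℕ} (ht : t ≠ 0) (r : ℕ) :
    (t.choose r : ℝ) * (1 / t) ^ r
      = (∏ i ∈ Icc 1 (r - 1), ((t : ℝ) - i)) / (r.factorial * (t : ℝ) ^ (r - 1)) := by
  cases r with
  | zero => simp
  | succ k =>
    have key := mul_prod_Icc_sub_eq_descFactorial t k
    rw [Nat.descFactorial_eq_factorial_mul_choose] at key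
    push_cast at key
    rw [Nat.add_sub_cancel, one_div, inv_pow, ← div_eq_mul_inv,
      div_eq_div_iff (by positivity) (by positivity)]
    linear_combination -(t : ℝ) ^ k * key

theorem lagrangian_uniform {t : ℕ} (ht : t ≠ 0) (r : ℕ) (α : ℝ) :
    lagrangian r α (fun _ : Fin t ↦ 1 / (t : ℝ))
      = ((t : ℝ) - 1) / (2 * t)
        + α * (∏ i ∈ Icc 1 (r - 1), ((t : ℝ) - i)) / (r.factorial * (t : ℝ) ^ (r - 1)) := by
  rw [lagrangian, esymmOn_const, esymmOn_const, card_univ, Fintype.card_fin,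
    choose_mul_inv_pow ht, choose_mul_inv_pow ht, mul_div_assoc]
  norm_num

theorem stmt_5_general (t r : ℕ) (ht : 1 ≤ t) (αr : ℝ) (hαr : 0 < αr) :
    IsGreatest {y : ℝ | ∃ x ∈ stdSimplex' t,
        y = (∑ e ∈ (univ : Finset (Fin t)).powersetCard 2, ∏ i ∈ e, x i)
          + αr * ∑ e ∈ (univ : Finset (Fin t)).powersetCard r, ∏ i ∈ e, x i}
      (((t : ℝ) - 1) / (2 * t)
        + αr * (∏ i ∈ Finset.Icc 1 (r - 1), ((t : ℝ) - i)) / (Nat.factorial r * (t : ℝ) ^ (r - 1))) ∧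
    ((∑ e ∈ (univ : Finset (Fin t)).powersetCard 2, ∏ _i ∈ e, ((1 : ℝ) / t))
        + αr * ∑ e ∈ (univ : Finset (Fin t)).powersetCard r, ∏ _i ∈ e, ((1 : ℝ) / t))
      = ((t : ℝ) - 1) / (2 * t)
        + αr * (∏ i ∈ Finset.Icc 1 (r - 1), ((t : ℝ) - i)) / (Nat.factorial r * (t : ℝ) ^ (r - 1)) := by
  have : Nonempty (Fin t) := ⟨⟨0, ht⟩⟩
  have hval := lagrangian_uniform (Nat.one_le_iff_ne_zero.1 ht) r αr
  have huniform := uniform_mem_stdSimplex (ι := Fin t)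
  have hmax := fun x (hx : x ∈ stdSimplex' t) ↦ lagrangian_le_uniform (r := r) hαr.le hx
  rw [Fintype.card_fin] at huniform hmax
  refine ⟨⟨⟨_, huniform, hval.symm⟩, ?_⟩, hval⟩
  rintro _ ⟨x, hx, rfl⟩
  exact (hmax x hx).trans hval.le

/-- The weighted Lagrangian of the complete `{2,r}`-hypergraph on `t` vertices. -/
theorem stmt_5 (t r : ℕ) (ht : 1 ≤ t) (hr : 3 ≤ r) (αr : ℝ) (hαr : 0 < αr) :
    IsGreatest {y : ℝ | ∃ x ∈ stdSimplex' t,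
        y = (∑ e ∈ (univ : Finset (Fin t)).powersetCard 2, ∏ i ∈ e, x i)
          + αr * ∑ e ∈ (univ : Finset (Fin t)).powersetCard r, ∏ i ∈ e, x i}
      (((t : ℝ) - 1) / (2 * t)
        + αr * (∏ i ∈ Finset.Icc 1 (r - 1), ((t : ℝ) - i)) / (Nat.factorial r * (t : ℝ) ^ (r - 1))) ∧
    ((∑ e ∈ (univ : Finset (Fin t)).powersetCard 2, ∏ _i ∈ e, ((1 : ℝ) / t))
        + αr * ∑ e ∈ (univ : Finset (Fin t)).powersetCard r, ∏ _i ∈ e, ((1 : ℝ) / t))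
      = ((t : ℝ) - 1) / (2 * t)
        + αr * (∏ i ∈ Finset.Icc 1 (r - 1), ((t : ℝ) - i)) / (Nat.factorial r * (t : ℝ) ^ (r - 1)) :=
  stmt_5_general t r ht αr hαr
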